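/- Let φ₁, φ₂ : ℂ → ℂ be functions holomorphic on {|y| > R} with φᵢ(y)/y → 1 as |y| → ∞, and suppose |φ₁(y)| = |φ₂(y)| for all |y| > R. Then φ₁ = φ₂ on {|y| > R}. -/

import Mathlib

/-!
The quotient `φ₁ / φ₂` is holomorphic of modulus one wherever `φ₂` does not vanish, which is the
case near infinity, so by the maximum modulus principle it is constant there; the asymptotics
`φᵢ(y) ~ y` force the constant to be `1`. The identity theorem on the connected exterior domain
then propagates `φ₁ = φ₂` to all of it.
-/

open Filter Bornology Set Topology

namespace Complex

theorem isPreconnected_setOf_lt_norm {R : ℝ} (hR : 0 < R) :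
    IsPreconnected {y : ℂ | R < ‖y‖} := by
  have himage : {y : ℂ | R < ‖y‖} = exp '' {w : ℂ | Real.log R < w.re} := by
    ext y
    constructor
    · intro hy
      have hy0 : y ≠ 0 := norm_pos_iff.mp (hR.trans hy)
      exact ⟨log y, by simpa [log_re] using Real.log_lt_log hR hy, exp_log hy0⟩
    · rintro ⟨w, hw, rfl⟩
      rwa [mem_ofPred_eq, norm_exp, ← Real.log_lt_iff_lt_exp hR]
  rw [himage]
  exact (convex_halfSpace_re_gt _).isPreconnected.image _ continuous_exp.continuousOn

end Complex

theorem exists_eq_const_mul_of_norm_eq {E : Type*} [NormedAddCommGroup E] [NormedSpace ℂ E]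
    {U : Set E} {f g : E → ℂ} (hU : IsPreconnected U) (hUo : IsOpen U)
    (hf : DifferentiableOn ℂ f U) (hg : DifferentiableOn ℂ g U) (hg0 : ∀ z ∈ U, g z ≠ 0)
    (hfg : ∀ z ∈ U, ‖f z‖ = ‖g z‖) : ∃ c : ℂ, ∀ z ∈ U, f z = c * g z := by
  rcases U.eq_empty_or_nonempty with rfl | ⟨z₀, hz₀⟩
  · exact ⟨0, by simp⟩
  have hnorm : ∀ z ∈ U, ‖(f / g) z‖ = 1 := fun z hz ↦ by
    rw [Pi.div_apply, norm_div, hfg z hz, div_self (norm_ne_zero_iff.mpr (hg0 z hz))]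
  have hmax : IsMaxOn (norm ∘ (f / g)) U z₀ := fun z hz ↦ by
    simp only [mem_ofPred_eq, Function.comp_apply, hnorm z hz, hnorm z₀ hz₀, le_refl]
  have hquot : DifferentiableOn ℂ (f / g) U := by
    simpa only [div_eq_mul_inv] using hf.mul (hg.inv hg0)
  refine ⟨(f / g) z₀, fun z hz ↦ ?_⟩
  have hconst : (f / g) z = (f / g) z₀ :=
    Complex.eqOn_of_isPreconnected_of_isMaxOn_norm hU hUo hquot hz₀ hmax hz
  rw [← hconst, Pi.div_apply, div_mul_cancel₀ _ (hg0 z hz)]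

theorem eqOn_setOf_lt_norm_of_norm_eq {R : ℝ} (hR : 0 < R) {f g : ℂ → ℂ}
    (hf : DifferentiableOn ℂ f {y | R < ‖y‖}) (hg : DifferentiableOn ℂ g {y | R < ‖y‖})
    (hg0 : ∀ y : ℂ, R < ‖y‖ → g y ≠ 0) (hfg : ∀ y : ℂ, R < ‖y‖ → ‖f y‖ = ‖g y‖)
    (hf_lim : Tendsto (fun y ↦ f y / y) (cobounded ℂ) (𝓝 1))
    (hg_lim : Tendsto (fun y ↦ g y / y) (cobounded ℂ) (𝓝 1)) :
    EqOn f g {y | R < ‖y‖} := by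
  obtain ⟨c, hc⟩ := exists_eq_const_mul_of_norm_eq (Complex.isPreconnected_setOf_lt_norm hR)
    (isOpen_lt continuous_const continuous_norm) hf hg hg0 hfg
  have hc_lim : Tendsto (fun y ↦ f y / y) (cobounded ℂ) (𝓝 c) := by
    refine (mul_one c ▸ hg_lim.const_mul c).congr' ?_
    filter_upwards [tendsto_norm_cobounded_atTop.eventually_gt_atTop R] with y hy
    rw [hc y hy, mul_div_assoc]
  obtain rfl : c = 1 := tendsto_nhds_unique hc_lim hf_lim
  intro y hy
  rw [hc y hy, one_mul]

theorem bottcher_uniqueness_general (R : ℝ) (hR : 0 < R) (φ₁ φ₂ : ℂ → ℂ)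
    (h₁ : DifferentiableOn ℂ φ₁ {y : ℂ | R < ‖y‖})
    (h₂ : DifferentiableOn ℂ φ₂ {y : ℂ | R < ‖y‖})
    (hlim₁ : Filter.Tendsto (fun y : ℂ => φ₁ y / y) (Bornology.cobounded ℂ) (nhds 1))
    (hlim₂ : Filter.Tendsto (fun y : ℂ => φ₂ y / y) (Bornology.cobounded ℂ) (nhds 1))
    (habs : ∀ y : ℂ, R < ‖y‖ → ‖φ₁ y‖ = ‖φ₂ y‖) :
    ∀ y : ℂ, R < ‖y‖ → φ₁ y = φ₂ y := by
  have hU : IsOpen {y : ℂ | R < ‖y‖} := isOpen_lt continuous_const continuous_norm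
  have hφ₂_ne : ∀ᶠ y in cobounded ℂ, φ₂ y ≠ 0 :=
    (hlim₂.eventually_ne one_ne_zero).mono fun y hy h0 ↦ hy (by simp [h0])
  obtain ⟨r, -, hr⟩ := (hasBasis_cobounded_norm (E := ℂ)).eventually_iff.mp hφ₂_ne
  set R' := max R r
  have hV : {y : ℂ | R' < ‖y‖} ⊆ {y : ℂ | R < ‖y‖} := fun y hy ↦ (le_max_left R r).trans_lt hy
  have hEqOn : EqOn φ₁ φ₂ {y : ℂ | R' < ‖y‖} :=
    eqOn_setOf_lt_norm_of_norm_eq (hR.trans_le (le_max_left R r)) (h₁.mono hV) (h₂.mono hV)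
      (fun y hy ↦ hr ((le_max_right R r).trans hy.le)) (fun y hy ↦ habs y (hV hy)) hlim₁ hlim₂
  obtain ⟨z₀, hz₀⟩ := ((tendsto_norm_cobounded_atTop (E := ℂ)).eventually_gt_atTop R').exists
  have hnear : φ₁ =ᶠ[𝓝 z₀] φ₂ :=
    eventually_of_mem ((isOpen_lt continuous_const continuous_norm).mem_nhds hz₀) hEqOn
  exact (h₁.analyticOnNhd hU).eqOn_of_preconnected_of_eventuallyEq (h₂.analyticOnNhd hU)
    (Complex.isPreconnected_setOf_lt_norm hR) (hV hz₀) hnear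

theorem bottcher_uniqueness (R : ℝ) (hR : 0 < R) (φ₁ φ₂ : ℂ → ℂ)
    (h₁ : DifferentiableOn ℂ φ₁ {y : ℂ | R < ‖y‖})
    (h₂ : DifferentiableOn ℂ φ₂ {y : ℂ | R < ‖y‖})
    (h₁v : ∀ y : ℂ, R < ‖y‖ → φ₁ y ≠ 0)
    (h₂v : ∀ y : ℂ, R < ‖y‖ → φ₂ y ≠ 0)
    (hlim₁ : Filter.Tendsto (fun y : ℂ => φ₁ y / y) (Bornology.cobounded ℂ) (nhds 1))
    (hlim₂ : Filter.Tendsto (fun y : ℂ => φ₂ y / y) (Bornology.cobounded ℂ) (nhds 1))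
    (habs : ∀ y : ℂ, R < ‖y‖ → ‖φ₁ y‖ = ‖φ₂ y‖) :
    ∀ y : ℂ, R < ‖y‖ → φ₁ y = φ₂ y :=
  bottcher_uniqueness_general R hR φ₁ φ₂ h₁ h₂ hlim₁ hlim₂ habs
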